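/- arXiv:2410.23650 — 6 statements merged into one kernel-verified Lean document; each statement's English description precedes it below -/
import Mathlib

section
/- Let M ≥ 1 and let c > 0, σ_s > 0, σ_a ≥ 0 be real constants. For each l ∈ {0,…,M} and each integer k let I_l^{(k)} : ℝ × ℝ → ℝ be differentiable functions of (t,x), with the conventions I_l^{(k)} ≡ 0 whenever k < 0 and I_{M+1}^{(k)} ≡ 0 for all k. Suppose that for every k ≥ 0 the order-ε^k coefficient equations of the linear P_N hierarchy hold: (1/c)∂_t I_0^{(k−2)} + ∂_x I_1^{(k−1)} = −σ_a I_0^{(k−2)}, and for every 1 ≤ l ≤ M, (1/c)∂_t I_l^{(k−2)} + (l/(2l+1)) ∂_x I_{l−1}^{(k−1)} + ((l+1)/(2l+1)) ∂_x I_{l+1}^{(k−1)} = −σ_a I_l^{(k−2)} − σ_s I_l^{(k)}. Then I_l^{(k)} ≡ 0 whenever 0 ≤ k < l ≤ M; that is, the formal power-series solution satisfies I_l = O(ε^l). -/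
/-- Chapman–Enskog order analysis for the linear P_N hierarchy
(Lemma 3.1, linear case): if the formal power-series coefficients
`I l k` satisfy the order-εᵏ equations of the linear P_N system, then
`I l k ≡ 0` whenever `0 ≤ k < l ≤ M`, i.e. `I_l = O(ε^l)`. -/
theorem chapman_enskog_order_linear
    (M : ℕ) (hM : 1 ≤ M)
    (c σs σa : ℝ) (hc : 0 < c) (hσs : 0 < σs) (hσa : 0 ≤ σa)
    (I : ℕ → ℤ → ℝ → ℝ → ℝ)
    (hdiff : ∀ l k, Differentiable ℝ (fun p : ℝ × ℝ => I l k p.1 p.2))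
    (hneg : ∀ l : ℕ, ∀ k : ℤ, k < 0 → ∀ t x : ℝ, I l k t x = 0)
    (hclosure : ∀ k : ℤ, ∀ t x : ℝ, I (M + 1) k t x = 0)
    (h0 : ∀ k : ℤ, 0 ≤ k → ∀ t x : ℝ,
      (1 / c) * deriv (fun s => I 0 (k - 2) s x) t
        + deriv (fun y => I 1 (k - 1) t y) x
      = -σa * I 0 (k - 2) t x)
    (hl : ∀ k : ℤ, 0 ≤ k → ∀ l : ℕ, 1 ≤ l → l ≤ M → ∀ t x : ℝ,
      (1 / c) * deriv (fun s => I l (k - 2) s x) t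
        + ((l : ℝ) / (2 * l + 1)) * deriv (fun y => I (l - 1) (k - 1) t y) x
        + (((l : ℝ) + 1) / (2 * l + 1)) * deriv (fun y => I (l + 1) (k - 1) t y) x
      = -σa * I l (k - 2) t x - σs * I l k t x) :
    ∀ l : ℕ, ∀ k : ℤ, 0 ≤ k → k < (l : ℤ) → l ≤ M → ∀ t x : ℝ,
      I l k t x = 0 := by
  have main : ∀ n : ℕ, ∀ l : ℕ, (n : ℤ) < l → l ≤ M → ∀ t x : ℝ, I l (n : ℤ) t x = 0 := by
    intro n
    induction n using Nat.strong_induction_on with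
    | _ n ih =>
      intro l hln hlM t x
      have hl1 : 1 ≤ l := by omega
      have heq := hl (n : ℤ) (by positivity) l hl1 hlM t x
      -- I l (n-2) vanishes everywhere
      have hA : ∀ t x : ℝ, I l ((n : ℤ) - 2) t x = 0 := by
        intro t x
        rcases lt_or_ge ((n : ℤ) - 2) 0 with h | h
        · exact hneg l _ h t x
        · have hn2 : ((n : ℤ) - 2) = ((n - 2 : ℕ) : ℤ) := by omega
          rw [hn2]
          exact ih (n - 2) (by omega) l (by omega) hlM t x
      -- I (l-1) (n-1) vanishes everywhere
      have hB : ∀ t x : ℝ, I (l - 1) ((n : ℤ) - 1) t x = 0 := by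
        intro t x
        rcases lt_or_ge ((n : ℤ) - 1) 0 with h | h
        · exact hneg _ _ h t x
        · have hn1 : ((n : ℤ) - 1) = ((n - 1 : ℕ) : ℤ) := by omega
          rw [hn1]
          exact ih (n - 1) (by omega) (l - 1) (by omega) (by omega) t x
      -- I (l+1) (n-1) vanishes everywhere
      have hC : ∀ t x : ℝ, I (l + 1) ((n : ℤ) - 1) t x = 0 := by
        intro t x
        rcases lt_or_ge ((n : ℤ) - 1) 0 with h | h
        · exact hneg _ _ h t x
        · rcases Nat.lt_or_ge l M with hlt | hge
          · have hn1 : ((n : ℤ) - 1) = ((n - 1 : ℕ) : ℤ) := by omega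
            rw [hn1]
            exact ih (n - 1) (by omega) (l + 1) (by omega) (by omega) t x
          · have : l = M := le_antisymm hlM hge
            rw [this]
            exact hclosure _ t x
      have dA : deriv (fun s => I l ((n : ℤ) - 2) s x) t = 0 := by
        have : (fun s => I l ((n : ℤ) - 2) s x) = fun _ => (0 : ℝ) :=
          funext fun s => hA s x
        rw [this]; exact deriv_const _ _
      have dB : deriv (fun y => I (l - 1) ((n : ℤ) - 1) t y) x = 0 := by
        have : (fun y => I (l - 1) ((n : ℤ) - 1) t y) = fun _ => (0 : ℝ) :=
          funext fun y => hB t y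
        rw [this]; exact deriv_const _ _
      have dC : deriv (fun y => I (l + 1) ((n : ℤ) - 1) t y) x = 0 := by
        have : (fun y => I (l + 1) ((n : ℤ) - 1) t y) = fun _ => (0 : ℝ) :=
          funext fun y => hC t y
        rw [this]; exact deriv_const _ _
      rw [dA, dB, dC, hA t x] at heq
      have : σs * I l (n : ℤ) t x = 0 := by linarith
      have := mul_eq_zero.mp this
      rcases this with h | h
      · exact absurd h (ne_of_gt hσs)
      · exact h
  intro l k hk0 hkl hlM t x
  have hk : k = ((k.toNat : ℕ) : ℤ) := (Int.toNat_of_nonneg hk0).symm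
  rw [hk]
  exact main k.toNat l (by omega) hlM t x
end

section
/- Let M ≥ 1 and let c > 0 and σ > 0 be real constants. For each l ∈ {0,…,M} and each integer k let I_l^{(k)} : ℝ × ℝ → ℝ be differentiable functions of (t,x), with the conventions I_l^{(k)} ≡ 0 whenever k < 0 and I_{M+1}^{(k)} ≡ 0 for all k. Suppose that for every k ≥ 0 and every 1 ≤ l ≤ M the order-ε^k coefficient equations of the gray-model P_N hierarchy hold: (1/c)∂_t I_l^{(k−2)} + (l/(2l+1)) ∂_x I_{l−1}^{(k−1)} + ((l+1)/(2l+1)) ∂_x I_{l+1}^{(k−1)} = −σ I_l^{(k)}. Then I_l^{(k)} ≡ 0 whenever 0 ≤ k < l ≤ M; that is, the formal power-series solution of the gray-model P_N system satisfies I_l = O(ε^l) for l = 1,…,M. -/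
/-- Chapman–Enskog order analysis for the gray-model P_N hierarchy
(Lemma 3.1, gray case): if the formal power-series coefficients
`I l k` satisfy the order-εᵏ equations of the gray-model P_N system, then
`I l k ≡ 0` whenever `0 ≤ k < l ≤ M`, i.e. `I_l = O(ε^l)` for `l = 1, …, M`. -/
theorem chapman_enskog_order_gray
    (M : ℕ) (hM : 1 ≤ M)
    (c σ : ℝ) (hc : 0 < c) (hσ : 0 < σ)
    (I : ℕ → ℤ → ℝ → ℝ → ℝ)
    (hdiff : ∀ l k, Differentiable ℝ (fun p : ℝ × ℝ => I l k p.1 p.2))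
    (hneg : ∀ l : ℕ, ∀ k : ℤ, k < 0 → ∀ t x : ℝ, I l k t x = 0)
    (hclosure : ∀ k : ℤ, ∀ t x : ℝ, I (M + 1) k t x = 0)
    (hl : ∀ k : ℤ, 0 ≤ k → ∀ l : ℕ, 1 ≤ l → l ≤ M → ∀ t x : ℝ,
      (1 / c) * deriv (fun s => I l (k - 2) s x) t
        + ((l : ℝ) / (2 * l + 1)) * deriv (fun y => I (l - 1) (k - 1) t y) x
        + (((l : ℝ) + 1) / (2 * l + 1)) * deriv (fun y => I (l + 1) (k - 1) t y) x
      = -σ * I l k t x) :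
    ∀ l : ℕ, ∀ k : ℤ, 0 ≤ k → k < (l : ℤ) → l ≤ M → ∀ t x : ℝ,
      I l k t x = 0 := by
  have key : ∀ n : ℕ, ∀ l : ℕ, l ≤ M → (n : ℤ) < (l : ℤ) → ∀ t x : ℝ, I l (n : ℤ) t x = 0 := by
    intro n
    induction n using Nat.strong_induction_on with
    | _ n ih =>
      intro l hlM hnl t x
      have hl1 : 1 ≤ l := by
        by_contra h
        interval_cases l <;> simp_all <;> omega
      have heq := hl (n : ℤ) (Int.ofNat_nonneg n) l hl1 hlM t x
      have h1 : (fun s => I l ((n : ℤ) - 2) s x) = fun _ => (0 : ℝ) := by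
        funext s
        rcases lt_or_ge ((n : ℤ) - 2) 0 with h | h
        · exact hneg l _ h s x
        · have hn2 : 2 ≤ n := by exact_mod_cast (by omega : (2:ℤ) ≤ n)
          have : ((n : ℤ) - 2) = ((n - 2 : ℕ) : ℤ) := by omega
          rw [this]
          exact ih (n - 2) (by omega) l hlM (by omega) s x
      have h2 : (fun y => I (l - 1) ((n : ℤ) - 1) t y) = fun _ => (0 : ℝ) := by
        funext y
        rcases lt_or_ge ((n : ℤ) - 1) 0 with h | h
        · exact hneg (l - 1) _ h t y
        · have hn1 : 1 ≤ n := by exact_mod_cast (by omega : (1:ℤ) ≤ n)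
          have : ((n : ℤ) - 1) = ((n - 1 : ℕ) : ℤ) := by omega
          rw [this]
          refine ih (n - 1) (by omega) (l - 1) (by omega) ?_ t y
          have : ((l - 1 : ℕ) : ℤ) = (l : ℤ) - 1 := by omega
          omega
      have h3 : (fun y => I (l + 1) ((n : ℤ) - 1) t y) = fun _ => (0 : ℝ) := by
        funext y
        rcases Nat.lt_or_ge l M with hlt | hge
        · rcases lt_or_ge ((n : ℤ) - 1) 0 with h | h
          · exact hneg (l + 1) _ h t y
          · have hn1 : 1 ≤ n := by exact_mod_cast (by omega : (1:ℤ) ≤ n)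
            have : ((n : ℤ) - 1) = ((n - 1 : ℕ) : ℤ) := by omega
            rw [this]
            refine ih (n - 1) (by omega) (l + 1) (by omega) (by push_cast; omega) t y
        · have : l = M := le_antisymm hlM hge
          subst this
          exact hclosure _ t y
      rw [h1, h2, h3] at heq; simp only [deriv_const'] at heq
      have : -σ * I l (n : ℤ) t x = 0 := by linarith
      have hσ' : σ ≠ 0 := ne_of_gt hσ
      nlinarith [this]
  intro l k hk hkl hlM t x
  have : k = ((k.toNat : ℕ) : ℤ) := (Int.toNat_of_nonneg hk).symm
  rw [this]
  exact key k.toNat l hlM (by omega) t x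
end

section
/- (Characteristic speeds of the P_N system.) Let M ≥ 0 and let J be the real (M+1)×(M+1) matrix indexed by l, m ∈ {0,…,M} with J_{l,m} = l/(2l+1) if m = l−1, J_{l,m} = (l+1)/(2l+1) if m = l+1, and J_{l,m} = 0 otherwise. Then a real number λ is an eigenvalue of J if and only if P_{M+1}(λ) = 0, where P_{M+1} is the (M+1)-st Legendre polynomial; consequently every real eigenvalue λ of J satisfies −1 < λ < 1. -/
/-- The Legendre polynomials, defined by `P₀ = 1`, `P₁ = μ` and the three-term
recurrence `(n+2) P_{n+2}(μ) = (2n+3) μ P_{n+1}(μ) − (n+1) P_n(μ)`. -/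
noncomputable def legendreP : ℕ → ℝ → ℝ
  | 0, _ => 1
  | 1, μ => μ
  | n + 2, μ =>
      ((2 * (n : ℝ) + 3) * μ * legendreP (n + 1) μ
        - ((n : ℝ) + 1) * legendreP n μ) / ((n : ℝ) + 2)

def wExt {M : ℕ} (v : Fin (M+1) → ℝ) (n : ℕ) : ℝ :=
  if h : n < M+1 then v ⟨n, h⟩ else 0

lemma pn_mulVec (M : ℕ) (J : Matrix (Fin (M + 1)) (Fin (M + 1)) ℝ)
    (hJ : ∀ l m : Fin (M + 1),
      J l m =
        if (m : ℕ) + 1 = (l : ℕ) then (l : ℝ) / (2 * (l : ℝ) + 1)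
        else if (m : ℕ) = (l : ℕ) + 1 then ((l : ℝ) + 1) / (2 * (l : ℝ) + 1)
        else 0) (v : Fin (M+1) → ℝ) (l : Fin (M+1)) :
    (2*(l:ℝ)+1) * J.mulVec v l
      = (l:ℝ) * wExt v ((l:ℕ)-1) + ((l:ℝ)+1) * wExt v ((l:ℕ)+1) := by
  have hlt := l.isLt
  have hden : (0:ℝ) < 2*(l:ℝ)+1 := by positivity
  have hsplit : ∀ m : Fin (M+1), m ∈ Finset.univ → J l m * v m =
      (if (m:ℕ)+1 = (l:ℕ) then ((l:ℝ)/(2*(l:ℝ)+1)) * v m else 0)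
    + (if (m:ℕ) = (l:ℕ)+1 then (((l:ℝ)+1)/(2*(l:ℝ)+1)) * v m else 0) := by
    intro m _
    rw [hJ]
    split_ifs with h1 h2 <;> first | ring1 | exact absurd h2 (by omega)
  have hmv : J.mulVec v l = ∑ m : Fin (M+1), J l m * v m := rfl
  rw [hmv, Finset.sum_congr rfl hsplit, Finset.sum_add_distrib]
  have e1 : (∑ m : Fin (M+1), if (m:ℕ)+1 = (l:ℕ) then ((l:ℝ)/(2*(l:ℝ)+1)) * v m else 0)
      = (l:ℝ)/(2*(l:ℝ)+1) * wExt v ((l:ℕ)-1) := by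
    rcases Nat.eq_zero_or_pos (l:ℕ) with h0 | hpos
    · rw [Finset.sum_eq_zero (fun m _ => if_neg (by omega))]
      simp [h0]
    · obtain ⟨k, hk⟩ : ∃ k, (l:ℕ) = k+1 := ⟨(l:ℕ)-1, by omega⟩
      have hkM : k < M+1 := by omega
      have hc : ∀ m : Fin (M+1), m ∈ Finset.univ →
          (if (m:ℕ)+1 = (l:ℕ) then ((l:ℝ)/(2*(l:ℝ)+1)) * v m else 0)
        = (if m = (⟨k,hkM⟩ : Fin (M+1)) then ((l:ℝ)/(2*(l:ℝ)+1)) * v m else 0) := by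
        intro m _
        refine if_congr ?_ rfl rfl
        rw [Fin.ext_iff]
        simp only []
        omega
      rw [Finset.sum_congr rfl hc,
        Finset.sum_ite_eq' Finset.univ (⟨k,hkM⟩ : Fin (M+1))]
      simp [wExt, hkM, hk]
  have e2 : (∑ m : Fin (M+1), if (m:ℕ) = (l:ℕ)+1 then (((l:ℝ)+1)/(2*(l:ℝ)+1)) * v m else 0)
      = ((l:ℝ)+1)/(2*(l:ℝ)+1) * wExt v ((l:ℕ)+1) := by
    by_cases hM : (l:ℕ)+1 < M+1
    · have hc : ∀ m : Fin (M+1), m ∈ Finset.univ →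
          (if (m:ℕ) = (l:ℕ)+1 then (((l:ℝ)+1)/(2*(l:ℝ)+1)) * v m else 0)
        = (if m = (⟨(l:ℕ)+1,hM⟩ : Fin (M+1)) then (((l:ℝ)+1)/(2*(l:ℝ)+1)) * v m else 0) := by
        intro m _
        exact if_congr (by rw [Fin.ext_iff]) rfl rfl
      rw [Finset.sum_congr rfl hc,
        Finset.sum_ite_eq' Finset.univ (⟨(l:ℕ)+1,hM⟩ : Fin (M+1))]
      simp [wExt, hM]
    · rw [Finset.sum_eq_zero (fun m _ => if_neg (by have := m.isLt; omega))]
      rw [wExt, dif_neg hM]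
      ring
  rw [e1, e2]
  field_simp
lemma legendre_rec' (n : ℕ) (μ : ℝ) :
    ((n:ℝ)+1) * legendreP (n+1) μ
      = (2*(n:ℝ)+1)*μ*legendreP n μ - (n:ℝ) * legendreP (n-1) μ := by
  cases n with
  | zero => simp [legendreP]
  | succ k =>
      simp only [Nat.add_sub_cancel]
      rw [show legendreP (k+1+1) μ = ((2 * (k : ℝ) + 3) * μ * legendreP (k + 1) μ
        - ((k : ℝ) + 1) * legendreP k μ) / ((k : ℝ) + 2) from rfl]
      have h2 : (k:ℝ) + 2 ≠ 0 := by positivity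
      push_cast
      field_simp
      ring

lemma legendre_neg : ∀ (n : ℕ) (x : ℝ), legendreP n (-x) = (-1)^n * legendreP n x
  | 0, _ => by simp [legendreP]
  | 1, _ => by simp [legendreP]
  | (n+2), x => by
      have h1 := legendre_neg (n+1) x
      have h2 := legendre_neg n x
      show ((2 * (n : ℝ) + 3) * (-x) * legendreP (n + 1) (-x)
        - ((n : ℝ) + 1) * legendreP n (-x)) / ((n : ℝ) + 2) = _
      rw [h1, h2, show legendreP (n+2) x = ((2 * (n : ℝ) + 3) * x * legendreP (n + 1) x
        - ((n : ℝ) + 1) * legendreP n x) / ((n : ℝ) + 2) from rfl]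
      ring

lemma legendre_ge_one {x : ℝ} (hx : 1 ≤ x) :
    ∀ n, 1 ≤ legendreP n x ∧ legendreP n x ≤ legendreP (n+1) x := by
  intro n
  induction n with
  | zero => refine ⟨le_refl _, ?_⟩ <;> simp [legendreP] <;> linarith
  | succ k ih =>
      obtain ⟨h1, h2⟩ := ih
      have h3 : (1:ℝ) ≤ legendreP (k+1) x := le_trans h1 h2
      refine ⟨h3, ?_⟩
      rw [show legendreP (k+2) x = ((2 * (k : ℝ) + 3) * x * legendreP (k + 1) x
        - ((k : ℝ) + 1) * legendreP k x) / ((k : ℝ) + 2) from rfl]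
      rw [le_div_iff₀ (by positivity)]
      nlinarith [mul_nonneg (mul_nonneg (show (0:ℝ) ≤ 2*(k:ℝ)+3 by positivity)
        (sub_nonneg.2 hx)) (le_trans zero_le_one h3),
        mul_le_mul_of_nonneg_left h2 (show (0:ℝ) ≤ (k:ℝ)+1 by positivity)]

/-- Characteristic speeds of the P_N system: a real number λ is an eigenvalue
of the flux Jacobian J if and only if it is a root of the Legendre polynomial
P_{M+1}; consequently every real eigenvalue of J lies in (−1, 1). -/
theorem pn_characteristic_speeds
    (M : ℕ) (J : Matrix (Fin (M + 1)) (Fin (M + 1)) ℝ)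
    (hJ : ∀ l m : Fin (M + 1),
      J l m =
        if (m : ℕ) + 1 = (l : ℕ) then (l : ℝ) / (2 * (l : ℝ) + 1)
        else if (m : ℕ) = (l : ℕ) + 1 then ((l : ℝ) + 1) / (2 * (l : ℝ) + 1)
        else 0) :
    ∀ lam : ℝ,
      ((∃ v : Fin (M + 1) → ℝ, v ≠ 0 ∧ J.mulVec v = lam • v) ↔
        legendreP (M + 1) lam = 0) ∧
      ((∃ v : Fin (M + 1) → ℝ, v ≠ 0 ∧ J.mulVec v = lam • v) →
        -1 < lam ∧ lam < 1) := by
  intro lam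
  have main : (∃ v : Fin (M + 1) → ℝ, v ≠ 0 ∧ J.mulVec v = lam • v) ↔
      legendreP (M + 1) lam = 0 := by
    constructor
    · rintro ⟨v, hv0, hv⟩
      set W : ℕ → ℝ := wExt v with hWdef
      have hrec : ∀ n : ℕ, n < M+1 →
          ((n:ℝ)+1) * W (n+1) = (2*(n:ℝ)+1)*lam*W n - (n:ℝ) * W (n-1) := by
        intro n hn
        have h := pn_mulVec M J hJ v ⟨n, hn⟩
        rw [hv] at h
        simp only [Pi.smul_apply, smul_eq_mul] at h
        have hv' : v ⟨n, hn⟩ = W n := by simp [hWdef, wExt, hn]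
        rw [hv'] at h
        linarith [h]
      have hW0 : ∀ n, n < M+1 → W n = W 0 * legendreP n lam := by
        intro n
        induction n using Nat.strong_induction_on with
        | _ n ih =>
          cases n with
          | zero => intro _; simp [legendreP]
          | succ k =>
            intro hn
            have hk : k < M+1 := by omega
            have h := hrec k hk
            rw [ih k (by omega) hk, ih (k-1) (by omega) (by omega)] at h
            have hr := legendre_rec' k lam
            have hne : ((k:ℝ)+1) ≠ 0 := by positivity
            refine mul_left_cancel₀ hne ?_
            rw [h]
            linear_combination (- W 0) * hr
      have hWM1 : W (M+1) = 0 := by simp [hWdef, wExt]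
      have hlast : W 0 * legendreP (M+1) lam = 0 := by
        have h := hrec M (by omega)
        rw [hWM1, hW0 M (by omega), hW0 (M-1) (by omega)] at h
        have hr := legendre_rec' M lam
        have hne : ((M:ℝ)+1) ≠ 0 := by positivity
        have : ((M:ℝ)+1) * (W 0 * legendreP (M+1) lam) = 0 := by
          linear_combination W 0 * hr - h
        exact (mul_eq_zero.1 this).resolve_left hne
      have hW0ne : W 0 ≠ 0 := by
        intro h0
        apply hv0
        funext m
        have hm := m.isLt
        have := hW0 (m:ℕ) hm
        rw [h0, zero_mul] at this
        have hvm : v m = W (m:ℕ) := by simp [hWdef, wExt, hm]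
        rw [hvm, this]
        rfl
      exact (mul_eq_zero.1 hlast).resolve_left hW0ne
    · intro hroot
      refine ⟨fun m : Fin (M+1) => legendreP (m:ℕ) lam, ?_, ?_⟩
      · intro h
        have h0 := congrFun h 0
        simp [legendreP] at h0
      · set v : Fin (M+1) → ℝ := fun m : Fin (M+1) => legendreP (m:ℕ) lam with hvdef
        have hWP : ∀ n, n ≤ M+1 → wExt v n = legendreP n lam := by
          intro n hn
          by_cases h : n < M+1
          · simp [wExt, h, hvdef]
          · have : n = M+1 := by omega
            rw [wExt, dif_neg h, this, hroot]
        funext l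
        have h := pn_mulVec M J hJ v l
        have hlt := l.isLt
        rw [hWP ((l:ℕ)-1) (by omega), hWP ((l:ℕ)+1) (by omega)] at h
        have hr := legendre_rec' (l:ℕ) lam
        have hne : (2*(l:ℝ)+1) ≠ 0 := by positivity
        have : (2*(l:ℝ)+1) * (J.mulVec v l) = (2*(l:ℝ)+1) * ((lam • v) l) := by
          rw [h]
          simp only [Pi.smul_apply, smul_eq_mul, hvdef]
          linear_combination hr
        exact mul_left_cancel₀ hne this
  refine ⟨main, fun hex => ?_⟩
  have hroot := main.1 hex
  constructor
  · by_contra h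
    push_neg at h
    have hx : 1 ≤ -lam := by linarith
    have h1 := (legendre_ge_one hx (M+1)).1
    rw [show -lam = -(lam) from rfl, legendre_neg (M+1) lam, hroot] at h1
    linarith
  · by_contra h
    push_neg at h
    have h1 := (legendre_ge_one h (M+1)).1
    rw [hroot] at h1
    linarith
end

section
/- (Solvability of the implicit step: invertibility of the Fourier symbol matrix.) Let M ≥ 1, let ε, Δt, Δx > 0 and ξ ∈ ℝ, and set c₀ = ε²/Δt, c₁ = ε(cos ξ − 1)/Δx, c₂ = i ε sin(ξ)/Δx ∈ ℂ. Let A be the complex (M+1)×(M+1) matrix indexed by l, m ∈ {0,…,M} with A_{0,0} = c₀ − ε c₁, A_{0,1} = c₂, A_{1,0} = (1/3) c₂, A_{1,1} = c₀ + 1 − c₁, A_{l,l−1} = (l/(2l+1)) c₂ and A_{l,l} = c₀ + 1 for 2 ≤ l ≤ M, and all other entries zero. Then A is invertible. -/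
open Matrix

lemma det_aux (p r s q d : ℂ) (g : ℕ → ℂ) :
    ∀ M : ℕ, ∀ A : Matrix (Fin (M + 2)) (Fin (M + 2)) ℂ,
    (∀ l m : Fin (M + 2), A l m =
      if (l : ℕ) = 0 ∧ (m : ℕ) = 0 then p
      else if (l : ℕ) = 0 ∧ (m : ℕ) = 1 then r
      else if (l : ℕ) = 1 ∧ (m : ℕ) = 0 then s
      else if (l : ℕ) = 1 ∧ (m : ℕ) = 1 then q
      else if 2 ≤ (l : ℕ) ∧ (m : ℕ) + 1 = (l : ℕ) then g (l : ℕ)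
      else if 2 ≤ (l : ℕ) ∧ (m : ℕ) = (l : ℕ) then d
      else 0) →
    A.det = (p * q - r * s) * d ^ M := by
  intro M
  induction M with
  | zero =>
    intro A hA
    rw [Matrix.det_fin_two, hA, hA, hA, hA]
    norm_num
  | succ n ih =>
    intro A hA
    have hl : ((Fin.last (n + 2)) : ℕ) = n + 2 := rfl
    rw [Matrix.det_succ_column A (Fin.last (n + 2)),
      Finset.sum_eq_single (Fin.last (n + 2))]
    · have hd : A (Fin.last (n + 2)) (Fin.last (n + 2)) = d := by
        rw [hA]
        split_ifs <;> first | rfl | omega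
      rw [hd]
      have hsub : ((Fin.last (n + 2)).succAbove : Fin (n + 2) → Fin (n + 3)) = Fin.castSucc :=
        Fin.succAbove_last
      rw [hsub]
      have hB := ih (A.submatrix Fin.castSucc Fin.castSucc) (by
        intro l m
        simp only [Matrix.submatrix_apply]
        rw [hA]
        simp [Fin.coe_castSucc])
      rw [hB]
      have hsign : ((-1 : ℂ)) ^ ((Fin.last (n + 2) : ℕ) + (Fin.last (n + 2) : ℕ)) = 1 := by
        rw [← two_mul, pow_mul]
        norm_num
      rw [hsign]
      ring
    · intro i _ hi
      have hiv : (i : ℕ) < n + 2 := by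
        have h' : (i : ℕ) ≠ n + 2 := fun h => hi (Fin.ext (by simpa [hl] using h))
        have := i.isLt
        omega
      have hz : A i (Fin.last (n + 2)) = 0 := by
        rw [hA]
        split_ifs <;> first | rfl | omega
      rw [hz]
      ring
    · intro h
      exact absurd (Finset.mem_univ _) h

/-- Solvability of the implicit step of the IMEX scheme: the Fourier symbol
matrix A of the implicit part is invertible. -/
theorem fourier_symbol_matrix_invertible
    (M : ℕ) (hM : 1 ≤ M)
    (ε Δt Δx ξ : ℝ) (hε : 0 < ε) (hΔt : 0 < Δt) (hΔx : 0 < Δx)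
    (c0 c1 : ℝ) (c2 : ℂ)
    (hc0 : c0 = ε ^ 2 / Δt)
    (hc1 : c1 = ε * (Real.cos ξ - 1) / Δx)
    (hc2 : c2 = Complex.I * ε * Real.sin ξ / Δx)
    (A : Matrix (Fin (M + 1)) (Fin (M + 1)) ℂ)
    (hA : ∀ l m : Fin (M + 1),
      A l m =
        if (l : ℕ) = 0 ∧ (m : ℕ) = 0 then (c0 : ℂ) - (ε : ℂ) * (c1 : ℂ)
        else if (l : ℕ) = 0 ∧ (m : ℕ) = 1 then c2
        else if (l : ℕ) = 1 ∧ (m : ℕ) = 0 then (1 / 3 : ℂ) * c2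
        else if (l : ℕ) = 1 ∧ (m : ℕ) = 1 then (c0 : ℂ) + 1 - (c1 : ℂ)
        else if 2 ≤ (l : ℕ) ∧ (m : ℕ) + 1 = (l : ℕ) then
          (((l : ℕ) : ℂ) / (2 * ((l : ℕ) : ℂ) + 1)) * c2
        else if 2 ≤ (l : ℕ) ∧ (m : ℕ) = (l : ℕ) then (c0 : ℂ) + 1
        else 0) :
    IsUnit A := by
  obtain ⟨N, rfl⟩ : ∃ N, M = N + 1 := ⟨M - 1, (Nat.succ_pred_eq_of_pos hM).symm⟩
  rw [Matrix.isUnit_iff_isUnit_det, isUnit_iff_ne_zero]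
  have hdet := det_aux ((c0 : ℂ) - (ε : ℂ) * (c1 : ℂ)) c2 ((1 / 3 : ℂ) * c2)
      ((c0 : ℂ) + 1 - (c1 : ℂ)) ((c0 : ℂ) + 1)
      (fun l => ((l : ℂ) / (2 * (l : ℂ) + 1)) * c2) N A (by intro l m; rw [hA])
  rw [hdet]
  -- real quantities
  set t : ℝ := ε * Real.sin ξ / Δx with ht
  have hc2' : c2 = Complex.I * (t : ℂ) := by
    rw [hc2, ht]; push_cast; ring
  have hc1le : c1 ≤ 0 := by
    rw [hc1]
    apply div_nonpos_of_nonpos_of_nonneg _ hΔx.le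
    have := Real.cos_le_one ξ
    nlinarith
  have hP : ((c0 : ℂ) - (ε : ℂ) * (c1 : ℂ)) * ((c0 : ℂ) + 1 - (c1 : ℂ)) - c2 * ((1 / 3 : ℂ) * c2)
      = (((c0 - ε * c1) * (c0 + 1 - c1) + t ^ 2 / 3 : ℝ) : ℂ) := by
    rw [hc2']
    push_cast
    ring_nf
    rw [Complex.I_sq]
    ring
  rw [hP]
  have hc0pos : 0 < c0 := by rw [hc0]; positivity
  have hPpos : 0 < (c0 - ε * c1) * (c0 + 1 - c1) + t ^ 2 / 3 := by
    have ha : 0 < c0 - ε * c1 := by nlinarith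
    have hb : 0 < c0 + 1 - c1 := by linarith
    nlinarith [sq_nonneg t, mul_pos ha hb]
  have hdpos : (0 : ℝ) < c0 + 1 := by linarith
  have h1 : (((c0 - ε * c1) * (c0 + 1 - c1) + t ^ 2 / 3 : ℝ) : ℂ) ≠ 0 := by
    exact_mod_cast hPpos.ne'
  have h2 : ((c0 : ℂ) + 1) ≠ 0 := by
    have : ((c0 + 1 : ℝ) : ℂ) ≠ 0 := by exact_mod_cast hdpos.ne'
    simpa using this
  exact mul_ne_zero h1 (pow_ne_zero _ h2)
end

section
/- (Discrete total-energy conservation of the first-order gray-model scheme under periodic boundary conditions.) Let N ≥ 1 and let ε, Δt, Δx, c, σ, C_v, a > 0 be real constants. Let I0ⁿ, I0ⁿ⁺¹, Î1ⁿ⁺¹, Tⁿ, Tⁿ⁺¹ : ℤ/Nℤ → ℝ satisfy, for all i ∈ ℤ/Nℤ: (ε²/c)·(I0ⁿ⁺¹_i − I0ⁿ_i)/Δt + ε²·[(Î1ⁿ⁺¹_{i+1} − Î1ⁿ⁺¹_{i−1})/(2Δx) − (I0ⁿ⁺¹_{i+1} − 2 I0ⁿ⁺¹_i + I0ⁿ⁺¹_{i−1})/(2Δx)]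 = σ·(a c (Tⁿ⁺¹_i)⁴ − I0ⁿ⁺¹_i), and ε² C_v (Tⁿ⁺¹_i − Tⁿ_i)/Δt = σ·(I0ⁿ⁺¹_i − a c (Tⁿ⁺¹_i)⁴). Then the total discrete energy is conserved: Σ_{i ∈ ℤ/Nℤ} ((1/c) I0ⁿ⁺¹_i + C_v Tⁿ⁺¹_i) = Σ_{i ∈ ℤ/Nℤ} ((1/c) I0ⁿ_i + C_v Tⁿ_i). -/
/-- Shift invariance of sums over ZMod N. -/
lemma zmod_sum_shift {N : ℕ} [NeZero N] (f : ZMod N → ℝ) (k : ZMod N) :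
    ∑ i : ZMod N, f (i + k) = ∑ i : ZMod N, f i :=
  Fintype.sum_equiv (Equiv.addRight k) _ _ (fun _ => rfl)

/-- Discrete total-energy conservation of the first-order gray-model IMEX scheme
under periodic boundary conditions. -/
theorem discrete_energy_conservation_gray_periodic
    (N : ℕ) [NeZero N] (hN : 1 ≤ N)
    (ε Δt Δx c σ Cv a : ℝ)
    (hε : 0 < ε) (hΔt : 0 < Δt) (hΔx : 0 < Δx) (hc : 0 < c)
    (hσ : 0 < σ) (hCv : 0 < Cv) (ha : 0 < a)
    (I0n I0n1 I1n1 Tn Tn1 : ZMod N → ℝ)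
    (hI0 : ∀ i : ZMod N,
      (ε ^ 2 / c) * (I0n1 i - I0n i) / Δt
        + ε ^ 2 * ((I1n1 (i + 1) - I1n1 (i - 1)) / (2 * Δx)
            - (I0n1 (i + 1) - 2 * I0n1 i + I0n1 (i - 1)) / (2 * Δx))
      = σ * (a * c * (Tn1 i) ^ 4 - I0n1 i))
    (hT : ∀ i : ZMod N,
      ε ^ 2 * Cv * (Tn1 i - Tn i) / Δt = σ * (I0n1 i - a * c * (Tn1 i) ^ 4)) :
    ∑ i : ZMod N, ((1 / c) * I0n1 i + Cv * Tn1 i)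
      = ∑ i : ZMod N, ((1 / c) * I0n i + Cv * Tn i) := by
  have hεt : ε ^ 2 / Δt ≠ 0 := by positivity
  -- per-cell identity
  have h0 : ∀ i : ZMod N,
      (ε ^ 2 / Δt) * ((1 / c) * I0n1 i + Cv * Tn1 i)
        - (ε ^ 2 / Δt) * ((1 / c) * I0n i + Cv * Tn i)
        + (ε ^ 2 / Δx) * (1 / 2) * (I1n1 (i + 1))
        - (ε ^ 2 / Δx) * (1 / 2) * (I1n1 (i - 1))
        - (ε ^ 2 / Δx) * (1 / 2) * (I0n1 (i + 1)) + (ε ^ 2 / Δx) * I0n1 i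
        - (ε ^ 2 / Δx) * (1 / 2) * (I0n1 (i - 1)) = 0 := by
    intro i
    have hc' : c ≠ 0 := ne_of_gt hc
    have hΔt' : Δt ≠ 0 := ne_of_gt hΔt
    have hΔx' : Δx ≠ 0 := ne_of_gt hΔx
    linear_combination (hI0 i) + (hT i)
  have hsum : ∑ i : ZMod N,
      ((ε ^ 2 / Δt) * ((1 / c) * I0n1 i + Cv * Tn1 i)
        - (ε ^ 2 / Δt) * ((1 / c) * I0n i + Cv * Tn i)
        + (ε ^ 2 / Δx) * (1 / 2) * (I1n1 (i + 1))
        - (ε ^ 2 / Δx) * (1 / 2) * (I1n1 (i - 1))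
        - (ε ^ 2 / Δx) * (1 / 2) * (I0n1 (i + 1)) + (ε ^ 2 / Δx) * I0n1 i
        - (ε ^ 2 / Δx) * (1 / 2) * (I0n1 (i - 1))) = 0 :=
    Finset.sum_eq_zero (fun i _ => h0 i)
  have e1 : ∑ i : ZMod N, I1n1 (i + 1) = ∑ i : ZMod N, I1n1 i := zmod_sum_shift _ _
  have e2 : ∑ i : ZMod N, I1n1 (i - 1) = ∑ i : ZMod N, I1n1 i := by
    simpa [sub_eq_add_neg] using zmod_sum_shift I1n1 (-1)
  have e3 : ∑ i : ZMod N, I0n1 (i + 1) = ∑ i : ZMod N, I0n1 i := zmod_sum_shift _ _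
  have e4 : ∑ i : ZMod N, I0n1 (i - 1) = ∑ i : ZMod N, I0n1 i := by
    simpa [sub_eq_add_neg] using zmod_sum_shift I0n1 (-1)
  simp only [Finset.sum_add_distrib, Finset.sum_sub_distrib, ← Finset.mul_sum,
    e1, e2, e3, e4] at hsum
  have g1 : ∑ i : ZMod N, ((1 / c) * I0n1 i + Cv * Tn1 i)
      = (1 / c) * ∑ i : ZMod N, I0n1 i + Cv * ∑ i : ZMod N, Tn1 i := by
    simp [Finset.sum_add_distrib, Finset.mul_sum]
  have g2 : ∑ i : ZMod N, ((1 / c) * I0n i + Cv * Tn i)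
      = (1 / c) * ∑ i : ZMod N, I0n i + Cv * ∑ i : ZMod N, Tn i := by
    simp [Finset.sum_add_distrib, Finset.mul_sum]
  have hkey : (ε ^ 2 / Δt) *
      (∑ i : ZMod N, ((1 / c) * I0n1 i + Cv * Tn1 i)
        - ∑ i : ZMod N, ((1 / c) * I0n i + Cv * Tn i)) = 0 := by
    rw [g1, g2]
    linear_combination hsum
  have hfin := (mul_eq_zero.mp hkey).resolve_left hεt
  linarith [hfin]
end

section
/- (Discrete total-energy conservation of the second-order IMEX gray-model scheme under periodic boundary conditions.) Let N ≥ 1 and let ε, Δt, Δx, c, σ, C_v, a > 0 be real constants. For m ∈ {n, n+1} let I0^m, Î1^m, T^m : ℤ/Nℤ → ℝ, and define Φ_i^m = (Î1^m_{i+1} − Î1^m_{i−1})/(2Δx) − (1/(2Δx))·(I0^m_{i+1} − 2 I0^m_i + I0^m_{i−1}). Suppose that for all i ∈ ℤ/Nℤ: (ε²/c)·(I0ⁿ⁺¹_i − I0ⁿ_i)/Δt + (ε²/2)·(Φ_iⁿ⁺¹ + Φ_iⁿ) = (σ/2)·[(a c (Tⁿ⁺¹_i)⁴ − I0ⁿ⁺¹_i)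 + (a c (Tⁿ_i)⁴ − I0ⁿ_i)], and ε² C_v (Tⁿ⁺¹_i − Tⁿ_i)/Δt = (σ/2)·[(I0ⁿ⁺¹_i − a c (Tⁿ⁺¹_i)⁴) + (I0ⁿ_i − a c (Tⁿ_i)⁴)]. Then Σ_{i ∈ ℤ/Nℤ} ((1/c) I0ⁿ⁺¹_i + C_v Tⁿ⁺¹_i) = Σ_{i ∈ ℤ/Nℤ} ((1/c) I0ⁿ_i + C_v Tⁿ_i). -/
/-!
Adding the two update equations cancels the (implicit) exchange terms, so on every cell the
change of the energy `I0 / c + Cv T` over one step is `-(Δt / 2)` times the average flux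
divergence. On a periodic grid each flux divergence sums to zero, since the centred and second
differences telescope, hence so does the total energy change.
-/

namespace LaxFriedrichs

variable {G : Type*} [AddGroup G] [Fintype G]

/-- Wave speed `v_max = 1`, neighbours `i ± e`; `I1` stands for `Î1 = I1 / ε`. -/
noncomputable def divergence (Δx : ℝ) (e : G) (I0 I1 : G → ℝ) (i : G) : ℝ :=
  (I1 (i + e) - I1 (i - e)) / (2 * Δx)
    - (1 / (2 * Δx)) * (I0 (i + e) - 2 * I0 i + I0 (i - e))

theorem sum_comp_add_right {M : Type*} [AddCommMonoid M] (f : G → M) (e : G) : ∑ i, f (i + e) = ∑ i, f i :=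
  Fintype.sum_equiv (Equiv.addRight e) _ _ fun _ => rfl

theorem sum_comp_sub_right {M : Type*} [AddCommMonoid M] (f : G → M) (e : G) : ∑ i, f (i - e) = ∑ i, f i :=
  Fintype.sum_equiv (Equiv.subRight e) _ _ fun _ => rfl

theorem sum_divergence_eq_zero (Δx : ℝ) (e : G) (I0 I1 : G → ℝ) :
    ∑ i, divergence Δx e I0 I1 i = 0 := by
  simp only [divergence, Finset.sum_sub_distrib, Finset.sum_add_distrib, ← Finset.sum_div,
    ← Finset.mul_sum, sum_comp_add_right, sum_comp_sub_right]
  ring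

end LaxFriedrichs

theorem energy_increment_eq_of_exchange {ε Δt c Cv q φ I0 I0' T T' : ℝ}
    (hε : ε ≠ 0) (hΔt : Δt ≠ 0)
    (hI0 : (ε ^ 2 / c) * (I0' - I0) / Δt + (ε ^ 2 / 2) * φ = q)
    (hT : ε ^ 2 * Cv * (T' - T) / Δt = -q) :
    ((1 / c) * I0' + Cv * T') - ((1 / c) * I0 + Cv * T) = -(Δt / 2) * φ := by
  have hbalance : (ε ^ 2 / c) * (I0' - I0) / Δt + ε ^ 2 * Cv * (T' - T) / Δt
      = -(ε ^ 2 / 2) * φ := by linear_combination hI0 + hT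
  calc ((1 / c) * I0' + Cv * T') - ((1 / c) * I0 + Cv * T)
      = Δt / ε ^ 2 * ((ε ^ 2 / c) * (I0' - I0) / Δt + ε ^ 2 * Cv * (T' - T) / Δt) := by
        field_simp
        ring
    _ = -(Δt / 2) * φ := by
        rw [hbalance]
        field_simp

theorem discrete_energy_conservation_gray_second_order_periodic_general
    (N : ℕ) [NeZero N]
    (ε Δt Δx c σ Cv a : ℝ)
    (hε : 0 < ε) (hΔt : 0 < Δt)
    (I0n I0n1 I1n I1n1 Tn Tn1 : ZMod N → ℝ)
    (Φn Φn1 : ZMod N → ℝ)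
    (hΦn : ∀ i : ZMod N,
      Φn i = (I1n (i + 1) - I1n (i - 1)) / (2 * Δx)
        - (1 / (2 * Δx)) * (I0n (i + 1) - 2 * I0n i + I0n (i - 1)))
    (hΦn1 : ∀ i : ZMod N,
      Φn1 i = (I1n1 (i + 1) - I1n1 (i - 1)) / (2 * Δx)
        - (1 / (2 * Δx)) * (I0n1 (i + 1) - 2 * I0n1 i + I0n1 (i - 1)))
    (hI0 : ∀ i : ZMod N,
      (ε ^ 2 / c) * (I0n1 i - I0n i) / Δt + (ε ^ 2 / 2) * (Φn1 i + Φn i)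
      = (σ / 2) * ((a * c * (Tn1 i) ^ 4 - I0n1 i)
          + (a * c * (Tn i) ^ 4 - I0n i)))
    (hT : ∀ i : ZMod N,
      ε ^ 2 * Cv * (Tn1 i - Tn i) / Δt
      = (σ / 2) * ((I0n1 i - a * c * (Tn1 i) ^ 4)
          + (I0n i - a * c * (Tn i) ^ 4))) :
    ∑ i : ZMod N, ((1 / c) * I0n1 i + Cv * Tn1 i)
      = ∑ i : ZMod N, ((1 / c) * I0n i + Cv * Tn i) := by
  have hcell (i : ZMod N) :
      ((1 / c) * I0n1 i + Cv * Tn1 i) - ((1 / c) * I0n i + Cv * Tn i)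
        = -(Δt / 2) * (Φn1 i + Φn i) :=
    energy_increment_eq_of_exchange hε.ne' hΔt.ne' (hI0 i) (by rw [hT i]; ring)
  have hΦ_sum (Φ I0 I1 : ZMod N → ℝ) (hΦ : ∀ i, Φ i = LaxFriedrichs.divergence Δx 1 I0 I1 i) :
      ∑ i, Φ i = 0 := by
    simp only [hΦ, LaxFriedrichs.sum_divergence_eq_zero]
  have hchange : ∑ i : ZMod N, (((1 / c) * I0n1 i + Cv * Tn1 i)
      - ((1 / c) * I0n i + Cv * Tn i)) = 0 := by
    rw [Finset.sum_congr rfl fun i _ => hcell i, ← Finset.mul_sum, Finset.sum_add_distrib,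
      hΦ_sum Φn1 I0n1 I1n1 hΦn1, hΦ_sum Φn I0n I1n hΦn]
    ring
  rwa [Finset.sum_sub_distrib, sub_eq_zero] at hchange

/-- Discrete total-energy conservation of the second-order (Crank–Nicolson)
IMEX gray-model scheme under periodic boundary conditions. -/
theorem discrete_energy_conservation_gray_second_order_periodic
    (N : ℕ) [NeZero N] (hN : 1 ≤ N)
    (ε Δt Δx c σ Cv a : ℝ)
    (hε : 0 < ε) (hΔt : 0 < Δt) (hΔx : 0 < Δx) (hc : 0 < c)
    (hσ : 0 < σ) (hCv : 0 < Cv) (ha : 0 < a)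
    (I0n I0n1 I1n I1n1 Tn Tn1 : ZMod N → ℝ)
    (Φn Φn1 : ZMod N → ℝ)
    (hΦn : ∀ i : ZMod N,
      Φn i = (I1n (i + 1) - I1n (i - 1)) / (2 * Δx)
        - (1 / (2 * Δx)) * (I0n (i + 1) - 2 * I0n i + I0n (i - 1)))
    (hΦn1 : ∀ i : ZMod N,
      Φn1 i = (I1n1 (i + 1) - I1n1 (i - 1)) / (2 * Δx)
        - (1 / (2 * Δx)) * (I0n1 (i + 1) - 2 * I0n1 i + I0n1 (i - 1)))
    (hI0 : ∀ i : ZMod N,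
      (ε ^ 2 / c) * (I0n1 i - I0n i) / Δt + (ε ^ 2 / 2) * (Φn1 i + Φn i)
      = (σ / 2) * ((a * c * (Tn1 i) ^ 4 - I0n1 i)
          + (a * c * (Tn i) ^ 4 - I0n i)))
    (hT : ∀ i : ZMod N,
      ε ^ 2 * Cv * (Tn1 i - Tn i) / Δt
      = (σ / 2) * ((I0n1 i - a * c * (Tn1 i) ^ 4)
          + (I0n i - a * c * (Tn i) ^ 4))) :
    ∑ i : ZMod N, ((1 / c) * I0n1 i + Cv * Tn1 i)
      = ∑ i : ZMod N, ((1 / c) * I0n i + Cv * Tn i) :=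
  discrete_energy_conservation_gray_second_order_periodic_general N ε Δt Δx c σ Cv a hε hΔt I0n I0n1
    I1n I1n1 Tn Tn1 Φn Φn1 hΦn hΦn1 hI0 hT
end
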